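/- In the setting of the jump-down Markov chain on a finite rooted tree T̃ (transition probability from v to u ∈ T̃(v)∖{v} proportional to κ_u²), the expected hitting time of the leaf set satisfies the recurrence: for non-leaf v, E_v = ∑_{c child of v} (κ_c/κ_v) · [1/(η̄(c) + 1) + E_c], where E_m = 0 for leaves m. -/

import Mathlib

/-! Write `S c = ∑_{u ∈ T̃(c)} κ_u²`. Induction from the leaves, using the children-sum
recurrence and the path-sum condition, gives `S v = κ_v · ℓ(v)` with `ℓ(v)` the κ-length of any
path from `v` down to a leaf; since `ℓ(v) = κ_v + ℓ(c)` for every child `c`, all children of `v`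
share the same `L = ℓ(c)`, so `S c = κ_c L` and `1 / (η̄(c) + 1) = κ_c² / S c = κ_c / L`.

The one-step equation at `u` says `∑_{w ∈ T̃(u) \ u} κ_w² E_w = (S u - κ_u²)(E_u - 1)` (at a leaf both
sides vanish). Applying it at `v` and at every child `c` of `v` gives
`(∑_c S c) E_v = ∑_c (S c · E_c + κ_c²)`; substituting `S c = κ_c L` and `∑_c κ_c = κ_v` yields the
recurrence. -/

open Finset

/-- A finite rooted tree, given by its root, the children relation, the subtree
(vertex sets of subtrees rooted at each vertex), and root-to-descendant paths. -/
structure FinRootedTree (V : Type*) [Fintype V] [DecidableEq V] where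
  root : V
  children : V → Finset V
  subtree : V → Finset V
  path : V → V → Finset V
  mem_subtree_self : ∀ v, v ∈ subtree v
  subtree_eq : ∀ v, subtree v = insert v ((children v).biUnion subtree)
  childSubtree_disjoint : ∀ v, (children v : Set V).PairwiseDisjoint subtree
  not_mem_child_subtree : ∀ v c, c ∈ children v → v ∉ subtree c
  path_self : ∀ v, path v v = {v}
  path_step : ∀ v c u, c ∈ children v → u ∈ subtree c → path v u = insert v (path c u)
  path_subset : ∀ v u, u ∈ subtree v → path v u ⊆ subtree v
  root_subtree : subtree root = Finset.univ

variable {V : Type*} [Fintype V] [DecidableEq V]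

/-- The set of leaves of the subtree rooted at `v`. -/
def FinRootedTree.leaves (t : FinRootedTree V) (v : V) : Finset V :=
  (t.subtree v).filter fun u => t.children u = ∅

/-- The effective resistance of the subtree rooted at `v`, in terms of `κ`. -/
noncomputable def FinRootedTree.resistance (t : FinRootedTree V) (κ : V → ℝ) (v : V) : ℝ :=
  (∑ u ∈ t.subtree v, κ u ^ 2) / κ v ^ 2 - 1

namespace FinRootedTree

variable (t : FinRootedTree V)

lemma subtree_subset_of_mem_children {v c : V} (hc : c ∈ t.children v) :
    t.subtree c ⊆ t.subtree v := by
  rw [t.subtree_eq v]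
  exact (subset_biUnion_of_mem _ hc).trans (subset_insert _ _)

lemma card_subtree_lt_of_mem_children {v c : V} (hc : c ∈ t.children v) :
    #(t.subtree c) < #(t.subtree v) :=
  card_lt_card ⟨t.subtree_subset_of_mem_children hc,
    fun h => t.not_mem_child_subtree v c hc (h (t.mem_subtree_self v))⟩

theorem induction_on {P : V → Prop} (v : V) (h : ∀ v, (∀ c ∈ t.children v, P c) → P v) : P v :=
  (measure fun v => #(t.subtree v)).wf.induction v fun v ih =>
    h v fun _ hc => ih _ (t.card_subtree_lt_of_mem_children hc)

lemma subtree_eq_singleton {v : V} (hv : t.children v = ∅) : t.subtree v = {v} := by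
  rw [t.subtree_eq v, hv, biUnion_empty, insert_empty]

lemma erase_subtree_eq_biUnion (v : V) :
    (t.subtree v).erase v = (t.children v).biUnion t.subtree := by
  have hv : v ∉ (t.children v).biUnion t.subtree := by
    simp only [mem_biUnion, not_exists, not_and]
    exact t.not_mem_child_subtree v
  rw [t.subtree_eq v, erase_insert hv]

lemma sum_erase_subtree {M : Type*} [AddCommMonoid M] (f : V → M) (v : V) :
    ∑ u ∈ (t.subtree v).erase v, f u = ∑ c ∈ t.children v, ∑ u ∈ t.subtree c, f u := by
  rw [t.erase_subtree_eq_biUnion, sum_biUnion (t.childSubtree_disjoint v)]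

lemma sum_path_of_mem_children {M : Type*} [AddCommMonoid M] (f : V → M) {v c u : V}
    (hc : c ∈ t.children v) (hu : u ∈ t.subtree c) :
    ∑ w ∈ t.path v u, f w = f v + ∑ w ∈ t.path c u, f w := by
  have hv : v ∉ t.path c u := fun h =>
    t.not_mem_child_subtree v c hc (t.path_subset c u hu h)
  rw [t.path_step v c u hc hu, sum_insert hv]

lemma mem_leaves_of_mem_children {v c m : V} (hc : c ∈ t.children v) (hm : m ∈ t.leaves c) :
    m ∈ t.leaves v := by
  simp only [leaves, mem_filter] at hm ⊢
  exact ⟨t.subtree_subset_of_mem_children hc hm.1, hm.2⟩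

lemma leaves_nonempty (v : V) : (t.leaves v).Nonempty := by
  induction v using t.induction_on with
  | h v ih =>
    obtain ⟨c, hc⟩ | hv := (t.children v).eq_empty_or_nonempty.symm
    · obtain ⟨m, hm⟩ := ih c hc
      exact ⟨m, t.mem_leaves_of_mem_children hc hm⟩
    · exact ⟨v, mem_filter.2 ⟨t.mem_subtree_self v, hv⟩⟩

lemma exists_mem_children_mem_leaves {v m : V} (hv : t.children v ≠ ∅)
    (hm : m ∈ t.leaves v) : ∃ c ∈ t.children v, m ∈ t.leaves c := by
  obtain ⟨hmv, hmleaf⟩ := mem_filter.1 hm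
  rw [t.subtree_eq v, mem_insert, mem_biUnion] at hmv
  obtain rfl | ⟨c, hc, hmc⟩ := hmv
  · exact absurd hmleaf hv
  · exact ⟨c, hc, mem_filter.2 ⟨hmc, hmleaf⟩⟩

variable {κ : V → ℝ}

lemma sum_path_eq_of_mem_children
    (hpath : ∀ v, ∀ m₀ ∈ t.leaves v, ∀ m₁ ∈ t.leaves v,
      ∑ u ∈ t.path v m₀, κ u = ∑ u ∈ t.path v m₁, κ u)
    {v c₀ c₁ m₀ m₁ : V} (hc₀ : c₀ ∈ t.children v) (hc₁ : c₁ ∈ t.children v)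
    (hm₀ : m₀ ∈ t.leaves c₀) (hm₁ : m₁ ∈ t.leaves c₁) :
    ∑ u ∈ t.path c₀ m₀, κ u = ∑ u ∈ t.path c₁ m₁, κ u := by
  have h := hpath v m₀ (t.mem_leaves_of_mem_children hc₀ hm₀)
    m₁ (t.mem_leaves_of_mem_children hc₁ hm₁)
  rwa [t.sum_path_of_mem_children κ hc₀ (mem_filter.1 hm₀).1,
    t.sum_path_of_mem_children κ hc₁ (mem_filter.1 hm₁).1, add_right_inj] at h

theorem sum_sq_subtree_eq_mul_sum_path
    (hrec : ∀ v, t.children v ≠ ∅ → κ v = ∑ c ∈ t.children v, κ c)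
    (hpath : ∀ v, ∀ m₀ ∈ t.leaves v, ∀ m₁ ∈ t.leaves v,
      ∑ u ∈ t.path v m₀, κ u = ∑ u ∈ t.path v m₁, κ u)
    (v : V) : ∀ m ∈ t.leaves v, ∑ u ∈ t.subtree v, κ u ^ 2 = κ v * ∑ u ∈ t.path v m, κ u := by
  induction v using t.induction_on with
  | h v ih =>
    intro m hm
    by_cases hv : t.children v = ∅
    · have hmv : m = v := by simpa [leaves, t.subtree_eq_singleton hv] using (mem_filter.1 hm).1
      rw [hmv, t.subtree_eq_singleton hv, t.path_self]
      simp [sq]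
    obtain ⟨c, hc, hmc⟩ := t.exists_mem_children_mem_leaves hv hm
    have hchild : ∀ c' ∈ t.children v,
        ∑ u ∈ t.subtree c', κ u ^ 2 = κ c' * ∑ u ∈ t.path c m, κ u := by
      intro c' hc'
      obtain ⟨m', hm'⟩ := t.leaves_nonempty c'
      rw [ih c' hc' m' hm', t.sum_path_eq_of_mem_children hpath hc' hc hm' hmc]
    rw [← add_sum_erase _ _ (t.mem_subtree_self v), t.sum_erase_subtree,
      sum_congr rfl hchild, ← sum_mul, ← hrec v hv,
      t.sum_path_of_mem_children κ hc (mem_filter.1 hmc).1]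
    ring

theorem exists_sum_sq_subtree_eq_mul_of_mem_children
    (hrec : ∀ v, t.children v ≠ ∅ → κ v = ∑ c ∈ t.children v, κ c)
    (hpath : ∀ v, ∀ m₀ ∈ t.leaves v, ∀ m₁ ∈ t.leaves v,
      ∑ u ∈ t.path v m₀, κ u = ∑ u ∈ t.path v m₁, κ u)
    (hpos : ∀ v, 0 < κ v) {v : V} (hv : t.children v ≠ ∅) :
    ∃ L > 0, ∀ c ∈ t.children v, ∑ u ∈ t.subtree c, κ u ^ 2 = κ c * L := by
  obtain ⟨c₀, hc₀⟩ := nonempty_iff_ne_empty.2 hv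
  obtain ⟨m₀, hm₀⟩ := t.leaves_nonempty c₀
  have hmass : ∀ c ∈ t.children v,
      ∑ u ∈ t.subtree c, κ u ^ 2 = κ c * ∑ u ∈ t.path c₀ m₀, κ u := by
    intro c hc
    obtain ⟨m, hm⟩ := t.leaves_nonempty c
    rw [t.sum_sq_subtree_eq_mul_sum_path hrec hpath c m hm,
      t.sum_path_eq_of_mem_children hpath hc hc₀ hm hm₀]
  refine ⟨_, pos_of_mul_pos_right ?_ (hpos c₀).le, hmass⟩
  rw [← hmass c₀ hc₀]
  exact sum_pos (fun u _ => pow_pos (hpos u) 2) ⟨c₀, t.mem_subtree_self c₀⟩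

variable {E : V → ℝ}

theorem sum_erase_subtree_sq_mul_eq (hpos : ∀ v, 0 < κ v)
    (hEstep : ∀ v, t.children v ≠ ∅ →
      E v = 1 + ∑ u ∈ (t.subtree v).erase v,
        (κ u ^ 2 / ∑ w ∈ (t.subtree v).erase v, κ w ^ 2) * E u)
    (v : V) :
    ∑ u ∈ (t.subtree v).erase v, κ u ^ 2 * E u
      = (∑ u ∈ (t.subtree v).erase v, κ u ^ 2) * (E v - 1) := by
  by_cases hv : t.children v = ∅
  · simp [t.subtree_eq_singleton hv]
  obtain ⟨c, hc⟩ := nonempty_iff_ne_empty.2 hv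
  have hcv : c ∈ (t.subtree v).erase v := by
    rw [t.erase_subtree_eq_biUnion]
    exact mem_biUnion.2 ⟨c, hc, t.mem_subtree_self c⟩
  have hmass : 0 < ∑ u ∈ (t.subtree v).erase v, κ u ^ 2 :=
    sum_pos' (fun u _ => sq_nonneg _) ⟨c, hcv, pow_pos (hpos c) 2⟩
  have h := hEstep v hv
  simp only [div_mul_eq_mul_div, ← sum_div] at h
  rw [h]
  field_simp
  ring

theorem sum_sq_children_mul_eq (hpos : ∀ v, 0 < κ v)
    (hEstep : ∀ v, t.children v ≠ ∅ →
      E v = 1 + ∑ u ∈ (t.subtree v).erase v,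
        (κ u ^ 2 / ∑ w ∈ (t.subtree v).erase v, κ w ^ 2) * E u)
    (v : V) :
    (∑ c ∈ t.children v, ∑ u ∈ t.subtree c, κ u ^ 2) * E v
      = ∑ c ∈ t.children v, ((∑ u ∈ t.subtree c, κ u ^ 2) * E c + κ c ^ 2) := by
  have hsplit : ∀ c, ∑ u ∈ t.subtree c, κ u ^ 2
      = κ c ^ 2 + ∑ u ∈ (t.subtree c).erase c, κ u ^ 2 := fun c =>
    (add_sum_erase _ _ (t.mem_subtree_self c)).symm
  have hweighted : ∀ c, ∑ u ∈ t.subtree c, κ u ^ 2 * E u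
      = (∑ u ∈ t.subtree c, κ u ^ 2) * E c - ∑ u ∈ (t.subtree c).erase c, κ u ^ 2 := by
    intro c
    rw [← add_sum_erase _ _ (t.mem_subtree_self c), t.sum_erase_subtree_sq_mul_eq hpos hEstep,
      hsplit]
    ring
  have h := t.sum_erase_subtree_sq_mul_eq hpos hEstep v
  rw [t.sum_erase_subtree, t.sum_erase_subtree, sum_congr rfl fun c _ => hweighted c] at h
  have hsum : ∑ c ∈ t.children v, ((∑ u ∈ t.subtree c, κ u ^ 2) * E c + κ c ^ 2)
      = ∑ c ∈ t.children v,
          ((∑ u ∈ t.subtree c, κ u ^ 2) * E c - ∑ u ∈ (t.subtree c).erase c, κ u ^ 2)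
        + ∑ c ∈ t.children v, ∑ u ∈ t.subtree c, κ u ^ 2 := by
    rw [← sum_add_distrib]
    exact sum_congr rfl fun c _ => by rw [hsplit c]; ring
  rw [hsum, h]
  ring

end FinRootedTree

theorem hitting_time_recurrence_general (t : FinRootedTree V) (κ : V → ℝ)
    (hrec : ∀ v, t.children v ≠ ∅ → κ v = ∑ c ∈ t.children v, κ c)
    (hpath : ∀ v, ∀ m₀ ∈ t.leaves v, ∀ m₁ ∈ t.leaves v,
      ∑ u ∈ t.path v m₀, κ u = ∑ u ∈ t.path v m₁, κ u)
    (hpos : ∀ v, 0 < κ v)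
    (E : V → ℝ)
    (hEstep : ∀ v, t.children v ≠ ∅ →
      E v = 1 + ∑ u ∈ (t.subtree v).erase v,
        (κ u ^ 2 / ∑ w ∈ (t.subtree v).erase v, κ w ^ 2) * E u)
    : ∀ v, t.children v ≠ ∅ →
      E v = ∑ c ∈ t.children v, (κ c / κ v) * (1 / (t.resistance κ c + 1) + E c) := by
  intro v hv
  obtain ⟨L, hL, hmass⟩ := t.exists_sum_sq_subtree_eq_mul_of_mem_children hrec hpath hpos hv
  have h := t.sum_sq_children_mul_eq hpos hEstep v
  rw [sum_congr rfl hmass, ← sum_mul, ← hrec v hv,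
    sum_congr rfl fun c hc => by rw [hmass c hc]] at h
  have hterm : ∀ c ∈ t.children v, (κ c / κ v) * (1 / (t.resistance κ c + 1) + E c)
      = (κ c * L * E c + κ c ^ 2) / (κ v * L) := by
    intro c hc
    have hκc := hpos c
    have hκv := hpos v
    rw [FinRootedTree.resistance, sub_add_cancel, hmass c hc]
    field_simp
    ring
  have hκv := hpos v
  rw [sum_congr rfl hterm, ← sum_div, ← h]
  field_simp

theorem hitting_time_recurrence (t : FinRootedTree V) (κ : V → ℝ)
    (hrec : ∀ v, t.children v ≠ ∅ → κ v = ∑ c ∈ t.children v, κ c)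
    (hpath : ∀ v, ∀ m₀ ∈ t.leaves v, ∀ m₁ ∈ t.leaves v,
      ∑ u ∈ t.path v m₀, κ u = ∑ u ∈ t.path v m₁, κ u)
    (hpos : ∀ v, 0 < κ v)
    (E : V → ℝ)
    (hEleaf : ∀ m, t.children m = ∅ → E m = 0)
    (hEstep : ∀ v, t.children v ≠ ∅ →
      E v = 1 + ∑ u ∈ (t.subtree v).erase v,
        (κ u ^ 2 / ∑ w ∈ (t.subtree v).erase v, κ w ^ 2) * E u)
    : ∀ v, t.children v ≠ ∅ →
      E v = ∑ c ∈ t.children v, (κ c / κ v) * (1 / (t.resistance κ c + 1) + E c) :=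
  hitting_time_recurrence_general t κ hrec hpath hpos E hEstep
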